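/- If N is an even number with N ≥ k, then the space X_N = (c_0, ‖·‖_N) is not locally almost square: there exists f with ‖f‖_N = 1 (namely f = ∑_{j∈E} 2e_j for a suitable set E with |E| = N/2 meeting each block E_n, 2 ≤ n ≤ N/2+1, in exactly one point) such that for every 0 < ε < 1/(3N) there is no h with ‖h‖_N = 1 satisfying max{‖f + h‖_N, ‖f − h‖_N} ≤ 1 + ε. -/

import Mathlib

open Finset Filter

/-- The block `E_n = {2^n, …, 2^{n+1} - 1}`. -/
def blockE (n : ℕ) : Finset ℕ := Finset.Ico (2 ^ n) (2 ^ (n + 1))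

/-- The value set `{|f(x)| : x ∈ D_N}` where `D_N = C ∪ B ∪ A_N`:
`A_N` are the averaging functionals `(1/N)∑_{j∈A} e_j*` over sets of size `kN`,
`B = {(1/k) e_j*}`, and `C = ⋃_{n≥1} C_n` with
`C_n = {(1/2)e_l* ± (1/2)e_m* : l ≠ m ∈ E_n}`. -/
def valueSetN (k N : ℕ) (f : ℕ → ℝ) : Set ℝ :=
  {r | ∃ A : Finset ℕ, A.card = k * N ∧ r = |∑ j ∈ A, f j| / N} ∪
  {r | ∃ j : ℕ, r = |f j| / k} ∪
  {r | ∃ n l m : ℕ, 1 ≤ n ∧ l ∈ blockE n ∧ m ∈ blockE n ∧ l ≠ m ∧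
        (r = |f l / 2 + f m / 2| ∨ r = |f l / 2 - f m / 2|)}

/-- The norm `‖f‖_N = sup_{x ∈ D_N} |f(x)|` on `ℓ_∞`. -/
noncomputable def normN (k N : ℕ) (f : ℕ → ℝ) : ℝ :=
  sSup (valueSetN k N f)

/-!
Put `f = 2·1_E`. If `‖f ± h‖_N ≤ 1 + ε`, testing `f ± h` against `(e_l* ± e_m*)/2`, with `l ∈ E`
and `m ∉ E` in the same block, gives `|h| ≤ 2ε` on `E`. Testing against the averaging functionals
over sets `A ⊇ E` with `|A| = kN`, on which `f` sums to `N`, gives `|∑_A h| ≤ εN`; padding with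
far-out indices, where `h` is negligible, extends this to every `T ⊇ E` with `|T| ≤ kN`. Hence `h`
is at most `2εN` in each coordinate and `|∑_A h| ≤ 5εN` for `|A| = kN`, so every functional of
`D_N` is at most `3εN < 1` at `h`, i.e. `‖h‖_N < 1`.
-/

open Topology

lemma abs_sum_le_card_mul {ι : Type*} {s : Finset ι} {g : ι → ℝ} {c : ℝ}
    (hg : ∀ j ∈ s, |g j| ≤ c) : |∑ j ∈ s, g j| ≤ s.card * c := by
  calc |∑ j ∈ s, g j| ≤ ∑ j ∈ s, |g j| := abs_sum_le_sum_abs g s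
    _ ≤ s.card • c := sum_le_card_nsmul s _ c hg
    _ = s.card * c := nsmul_eq_mul _ _

section valueSetN

variable {k N : ℕ}

lemma abs_sum_div_mem_valueSetN (g : ℕ → ℝ) {A : Finset ℕ} (hA : A.card = k * N) :
    |∑ j ∈ A, g j| / N ∈ valueSetN k N g :=
  Or.inl (Or.inl ⟨A, hA, rfl⟩)

lemma abs_div_mem_valueSetN (g : ℕ → ℝ) (j : ℕ) : |g j| / k ∈ valueSetN k N g :=
  Or.inl (Or.inr ⟨j, rfl⟩)

lemma abs_half_add_mem_valueSetN (g : ℕ → ℝ) {n l m : ℕ} (hn : 1 ≤ n) (hl : l ∈ blockE n)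
    (hm : m ∈ blockE n) (hlm : l ≠ m) : |g l / 2 + g m / 2| ∈ valueSetN k N g :=
  Or.inr ⟨n, l, m, hn, hl, hm, hlm, Or.inl rfl⟩

lemma abs_half_sub_mem_valueSetN (g : ℕ → ℝ) {n l m : ℕ} (hn : 1 ≤ n) (hl : l ∈ blockE n)
    (hm : m ∈ blockE n) (hlm : l ≠ m) : |g l / 2 - g m / 2| ∈ valueSetN k N g :=
  Or.inr ⟨n, l, m, hn, hl, hm, hlm, Or.inr rfl⟩

lemma abs_half_add_half_le (a b : ℝ) : |a / 2 + b / 2| ≤ (|a| + |b|) / 2 := by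
  simpa [abs_div, add_div] using abs_add_le (a / 2) (b / 2)

lemma abs_half_sub_half_le (a b : ℝ) : |a / 2 - b / 2| ≤ (|a| + |b|) / 2 := by
  simpa [abs_div, add_div] using abs_sub (a / 2) (b / 2)

lemma forall_mem_valueSetN_le {g : ℕ → ℝ} {c : ℝ}
    (hA : ∀ A : Finset ℕ, A.card = k * N → |∑ j ∈ A, g j| / N ≤ c)
    (hB : ∀ j, |g j| / k ≤ c)
    (hC : ∀ n l m, l ∈ blockE n → m ∈ blockE n → l ≠ m → |g l| + |g m| ≤ 2 * c) :
    ∀ r ∈ valueSetN k N g, r ≤ c := by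
  rintro r ((⟨A, hAc, rfl⟩ | ⟨j, rfl⟩) | ⟨n, l, m, -, hl, hm, hlm, rfl | rfl⟩)
  · exact hA A hAc
  · exact hB j
  · linarith [abs_half_add_half_le (g l) (g m), hC n l m hl hm hlm]
  · linarith [abs_half_sub_half_le (g l) (g m), hC n l m hl hm hlm]

lemma bddAbove_valueSetN {g : ℕ → ℝ} (hk : 0 < k) (hg : Tendsto g atTop (𝓝 0)) :
    BddAbove (valueSetN k N g) := by
  obtain ⟨M, hM⟩ := hg.abs.bddAbove_range
  replace hM : ∀ j, |g j| ≤ M := fun j => hM ⟨j, rfl⟩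
  have hM0 : 0 ≤ M := (abs_nonneg _).trans (hM 0)
  have hk1 : (1 : ℝ) ≤ k := by exact_mod_cast hk
  refine ⟨k * M, forall_mem_valueSetN_le (fun A hA => ?_) (fun j => ?_) fun _ l m _ _ _ => ?_⟩
  · refine div_le_of_le_mul₀ N.cast_nonneg (by positivity) ?_
    calc |∑ j ∈ A, g j| ≤ A.card * M := abs_sum_le_card_mul fun j _ => hM j
      _ = k * M * N := by rw [hA]; push_cast; ring
  · exact (div_le_self (abs_nonneg (g j)) hk1).trans (by nlinarith [hM j])
  · nlinarith [hM l, hM m]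

lemma le_normN {g : ℕ → ℝ} {r : ℝ} (hk : 0 < k) (hg : Tendsto g atTop (𝓝 0))
    (hr : r ∈ valueSetN k N g) : r ≤ normN k N g :=
  le_csSup (bddAbove_valueSetN hk hg) hr

lemma valueSetN_nonempty (g : ℕ → ℝ) : (valueSetN k N g).Nonempty :=
  ⟨_, abs_div_mem_valueSetN (N := N) g 0⟩

lemma normN_le {g : ℕ → ℝ} {c : ℝ} (hg : ∀ r ∈ valueSetN k N g, r ≤ c) : normN k N g ≤ c :=
  csSup_le (valueSetN_nonempty g) hg

end valueSetN

lemma pow_mem_blockE_iff {l n : ℕ} : 2 ^ l ∈ blockE n ↔ l = n := by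
  simp only [blockE, mem_Ico]
  constructor
  · rintro ⟨h1, h2⟩
    have := (Nat.pow_le_pow_iff_right one_lt_two).mp h1
    have := (Nat.pow_lt_pow_iff_right one_lt_two).mp h2
    omega
  · rintro rfl
    exact ⟨le_rfl, Nat.pow_lt_pow_right (by norm_num) (Nat.lt_succ_self _)⟩

lemma succ_pow_mem_blockE {n : ℕ} (hn : 1 ≤ n) : 2 ^ n + 1 ∈ blockE n := by
  have := Nat.one_lt_two_pow_iff.mpr (Nat.one_le_iff_ne_zero.mp hn)
  simp only [blockE, mem_Ico, pow_succ]
  omega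

def powBlocks (Q : ℕ) : Finset ℕ := (Icc 2 (Q + 1)).image (2 ^ ·)

lemma mem_powBlocks {Q j : ℕ} : j ∈ powBlocks Q ↔ ∃ n, 2 ≤ n ∧ n ≤ Q + 1 ∧ 2 ^ n = j := by
  simp [powBlocks, and_assoc]

lemma card_powBlocks (Q : ℕ) : (powBlocks Q).card = Q := by
  rw [powBlocks, card_image_of_injective _ (Nat.pow_right_injective le_rfl), Nat.card_Icc]
  omega

lemma powBlocks_inter_blockE {Q n : ℕ} (h2n : 2 ≤ n) (hnQ : n ≤ Q + 1) :
    powBlocks Q ∩ blockE n = {2 ^ n} := by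
  ext j
  simp only [mem_inter, mem_singleton, mem_powBlocks]
  constructor
  · rintro ⟨⟨l, -, -, rfl⟩, hl⟩
    rw [pow_mem_blockE_iff.mp hl]
  · rintro rfl
    exact ⟨⟨n, h2n, hnQ, rfl⟩, pow_mem_blockE_iff.mpr rfl⟩

lemma card_powBlocks_inter_blockE_le_one (Q n : ℕ) : (powBlocks Q ∩ blockE n).card ≤ 1 := by
  refine card_le_one.mpr ?_
  simp only [mem_inter, mem_powBlocks]
  rintro _ ⟨⟨a, -, -, rfl⟩, ha⟩ _ ⟨⟨b, -, -, rfl⟩, hb⟩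
  rw [pow_mem_blockE_iff.mp ha, pow_mem_blockE_iff.mp hb]

lemma exists_blockE_of_mem_powBlocks {Q j : ℕ} (hj : j ∈ powBlocks Q) :
    ∃ n, 2 ≤ n ∧ n ≤ Q + 1 ∧ j ∈ blockE n := by
  obtain ⟨n, h2n, hnQ, rfl⟩ := mem_powBlocks.mp hj
  exact ⟨n, h2n, hnQ, pow_mem_blockE_iff.mpr rfl⟩

lemma exists_partner_of_mem_powBlocks {Q j : ℕ} (hj : j ∈ powBlocks Q) :
    ∃ n m, 1 ≤ n ∧ j ∈ blockE n ∧ m ∈ blockE n ∧ m ∉ powBlocks Q := by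
  obtain ⟨n, h2n, hnQ, rfl⟩ := mem_powBlocks.mp hj
  refine ⟨n, 2 ^ n + 1, by omega, pow_mem_blockE_iff.mpr rfl, succ_pow_mem_blockE (by omega),
    fun hm => ?_⟩
  have := (powBlocks_inter_blockE h2n hnQ).le
    (mem_inter.mpr ⟨hm, succ_pow_mem_blockE (by omega)⟩)
  simp at this

def twoIndicator (E : Finset ℕ) (j : ℕ) : ℝ := if j ∈ E then 2 else 0

section twoIndicator

variable {k N : ℕ} {E : Finset ℕ}

lemma sum_twoIndicator (E A : Finset ℕ) : ∑ j ∈ A, twoIndicator E j = 2 * (A ∩ E).card := by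
  simp only [twoIndicator]
  rw [sum_ite_mem, sum_const, nsmul_eq_mul, mul_comm]

lemma abs_twoIndicator_le (E : Finset ℕ) (j : ℕ) : |twoIndicator E j| ≤ 2 := by
  unfold twoIndicator; split_ifs <;> norm_num

lemma tendsto_twoIndicator (E : Finset ℕ) : Tendsto (twoIndicator E) atTop (𝓝 0) := by
  refine tendsto_const_nhds.congr' ?_
  rw [← Nat.cofinite_eq_atTop]
  filter_upwards [E.finite_toSet.compl_mem_cofinite] with j hj
  simp [twoIndicator, show j ∉ E from hj]

lemma normN_twoIndicator (hk : 2 ≤ k) (hN : 0 < N) (hE : 2 * E.card = N)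
    (hblock : ∀ n, (E ∩ blockE n).card ≤ 1) : normN k N (twoIndicator E) = 1 := by
  have hN' : (0 : ℝ) < N := by exact_mod_cast hN
  have hE' : (2 : ℝ) * E.card = N := by exact_mod_cast hE
  obtain ⟨A, hEA, hA⟩ := Infinite.exists_superset_card_eq E (k * N) (by nlinarith)
  refine le_antisymm (normN_le ?_) (le_normN (by omega) (tendsto_twoIndicator E) ?_)
  · refine forall_mem_valueSetN_le (fun A _ => ?_) (fun j => ?_) fun n l m hl hm hlm => ?_
    · rw [sum_twoIndicator, abs_of_nonneg (by positivity), div_le_one hN', ← hE']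
      gcongr
      exact inter_subset_right
    · rw [div_le_one (by positivity)]
      exact (abs_twoIndicator_le E j).trans (by exact_mod_cast hk)
    · have : ¬(l ∈ E ∧ m ∈ E) := fun ⟨hlE, hmE⟩ =>
        hlm (card_le_one.mp (hblock n) l (mem_inter.mpr ⟨hlE, hl⟩) m (mem_inter.mpr ⟨hmE, hm⟩))
      unfold twoIndicator
      split_ifs <;> simp_all
  · convert abs_sum_div_mem_valueSetN (twoIndicator E) hA using 1
    rw [sum_twoIndicator, inter_eq_right.mpr hEA, abs_of_nonneg (by positivity), hE',
      div_self hN'.ne']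

end twoIndicator

section perturbation

variable {k N : ℕ} {E : Finset ℕ} {h : ℕ → ℝ} {ε : ℝ}

/-- Averaging the values of `(e_l* ± e_m*)/2` at `f + h` and at `f - h` cancels `h m`. -/
lemma abs_le_two_mul_of_blockE_partner
    (hadd : 1 + ε ∈ upperBounds (valueSetN k N (twoIndicator E + h)))
    (hsub : 1 + ε ∈ upperBounds (valueSetN k N (twoIndicator E - h)))
    {n l m : ℕ} (hn : 1 ≤ n) (hl : l ∈ blockE n) (hm : m ∈ blockE n) (hlE : l ∈ E) (hmE : m ∉ E) :
    |h l| ≤ 2 * ε := by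
  have hlm : l ≠ m := fun h => hmE (h ▸ hlE)
  have e1 := hadd (abs_half_add_mem_valueSetN _ hn hl hm hlm)
  have e2 := hadd (abs_half_sub_mem_valueSetN _ hn hl hm hlm)
  have e3 := hsub (abs_half_add_mem_valueSetN _ hn hl hm hlm)
  have e4 := hsub (abs_half_sub_mem_valueSetN _ hn hl hm hlm)
  simp only [Pi.add_apply, Pi.sub_apply, twoIndicator, if_pos hlE, if_neg hmE, abs_le] at e1 e2 e3 e4
  rw [abs_le]
  constructor <;> linarith

lemma abs_sum_le_of_superset_card_eq (hN : 0 < N) (hE : 2 * E.card = N)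
    (hadd : 1 + ε ∈ upperBounds (valueSetN k N (twoIndicator E + h)))
    (hsub : 1 + ε ∈ upperBounds (valueSetN k N (twoIndicator E - h)))
    {A : Finset ℕ} (hEA : E ⊆ A) (hA : A.card = k * N) : |∑ j ∈ A, h j| ≤ ε * N := by
  have hN' : (0 : ℝ) < N := by exact_mod_cast hN
  have hfA : ∑ j ∈ A, twoIndicator E j = N := by
    rw [sum_twoIndicator, inter_eq_right.mpr hEA]; exact_mod_cast hE
  have e1 := hadd (abs_sum_div_mem_valueSetN _ hA)
  have e2 := hsub (abs_sum_div_mem_valueSetN _ hA)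
  simp only [Pi.add_apply, Pi.sub_apply, sum_add_distrib, sum_sub_distrib, hfA,
    div_le_iff₀ hN', abs_le] at e1 e2
  rw [abs_le]
  constructor <;> linarith

/-- Pad `T` by a block of `k N - |T|` indices far out, where `h` is negligible. -/
lemma abs_sum_le_of_superset_card_le (hN : 0 < N) (hE : 2 * E.card = N)
    (hh : Tendsto h atTop (𝓝 0))
    (hadd : 1 + ε ∈ upperBounds (valueSetN k N (twoIndicator E + h)))
    (hsub : 1 + ε ∈ upperBounds (valueSetN k N (twoIndicator E - h)))
    {T : Finset ℕ} (hET : E ⊆ T) (hT : T.card ≤ k * N) : |∑ j ∈ T, h j| ≤ ε * N := by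
  set c := k * N - T.card
  have htail : Tendsto (fun r => ∑ j ∈ T, h j + ∑ i ∈ range c, h (r + i)) atTop
      (𝓝 (∑ j ∈ T, h j)) := by
    simpa using tendsto_const_nhds.add
      (tendsto_finsetSum (range c) fun i _ => hh.comp (tendsto_add_atTop_nat i))
  obtain ⟨b, hTb⟩ := exists_nat_subset_range T
  refine le_of_tendsto htail.abs (eventually_atTop.mpr ⟨b, fun r hr => ?_⟩)
  have hdisj : Disjoint T (Ico r (r + c)) := disjoint_left.mpr fun j hjT hjP => by
    have := mem_range.mp (hTb hjT); have := (mem_Ico.mp hjP).1; omega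
  have hA : (T ∪ Ico r (r + c)).card = k * N := by
    rw [card_union_of_disjoint hdisj, Nat.card_Ico]; omega
  have := abs_sum_le_of_superset_card_eq hN hE hadd hsub (hET.trans subset_union_left) hA
  rwa [sum_union hdisj, sum_Ico_eq_sum_range, add_tsub_cancel_left] at this

lemma abs_sum_le_of_disjoint (hN : 0 < N) (hE : 2 * E.card = N) (hh : Tendsto h atTop (𝓝 0))
    (hadd : 1 + ε ∈ upperBounds (valueSetN k N (twoIndicator E + h)))
    (hsub : 1 + ε ∈ upperBounds (valueSetN k N (twoIndicator E - h)))
    {S : Finset ℕ} (hS : Disjoint S E) (hSc : S.card + E.card ≤ k * N) :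
    |∑ j ∈ S, h j| ≤ 2 * ε * N := by
  have hSE := abs_sum_le_of_superset_card_le hN hE hh hadd hsub subset_union_right
    ((card_union_le S E).trans hSc)
  have hE' := abs_sum_le_of_superset_card_le hN hE hh hadd hsub subset_rfl (by omega)
  rw [sum_union hS] at hSE
  calc |∑ j ∈ S, h j| = |(∑ j ∈ S, h j + ∑ j ∈ E, h j) - ∑ j ∈ E, h j| := by
        rw [add_sub_cancel_right]
    _ ≤ |∑ j ∈ S, h j + ∑ j ∈ E, h j| + |∑ j ∈ E, h j| := abs_sub _ _
    _ ≤ 2 * ε * N := by linarith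

/-- Split `S` into two halves, each short enough for `abs_sum_le_of_disjoint`. -/
lemma abs_sum_le_of_disjoint_card_le (hk : 2 ≤ k) (hN : 0 < N) (hE : 2 * E.card = N)
    (hh : Tendsto h atTop (𝓝 0))
    (hadd : 1 + ε ∈ upperBounds (valueSetN k N (twoIndicator E + h)))
    (hsub : 1 + ε ∈ upperBounds (valueSetN k N (twoIndicator E - h)))
    {S : Finset ℕ} (hS : Disjoint S E) (hSc : S.card ≤ k * N) :
    |∑ j ∈ S, h j| ≤ 4 * ε * N := by
  have hkN : 2 * N ≤ k * N := Nat.mul_le_mul_right N hk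
  obtain ⟨t, htS, ht⟩ := exists_subset_card_eq (Nat.div_le_self S.card 2)
  have h1 := abs_sum_le_of_disjoint hN hE hh hadd hsub (hS.mono_left htS) (by omega)
  have h2 := abs_sum_le_of_disjoint hN hE hh hadd hsub (hS.mono_left sdiff_subset)
    (by rw [card_sdiff_of_subset htS]; omega)
  rw [← sum_sdiff htS]
  linarith [abs_add_le (∑ j ∈ S \ t, h j) (∑ j ∈ t, h j)]

lemma abs_apply_le_two_mul (hk : 2 ≤ k) (hN : 0 < N) (hE : 2 * E.card = N)
    (hh : Tendsto h atTop (𝓝 0))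
    (hadd : 1 + ε ∈ upperBounds (valueSetN k N (twoIndicator E + h)))
    (hsub : 1 + ε ∈ upperBounds (valueSetN k N (twoIndicator E - h)))
    (hEh : ∀ j ∈ E, |h j| ≤ 2 * ε) (j : ℕ) : |h j| ≤ 2 * ε * N := by
  have hkN : 2 * N ≤ k * N := Nat.mul_le_mul_right N hk
  by_cases hj : j ∈ E
  · have hN' : (1 : ℝ) ≤ N := by exact_mod_cast hN
    nlinarith [hEh j hj, abs_nonneg (h j)]
  · simpa using abs_sum_le_of_disjoint hN hE hh hadd hsub (disjoint_singleton_left.mpr hj)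
      (by rw [card_singleton]; omega)

lemma abs_sum_le_five_mul (hk : 2 ≤ k) (hN : 0 < N) (hE : 2 * E.card = N)
    (hh : Tendsto h atTop (𝓝 0))
    (hadd : 1 + ε ∈ upperBounds (valueSetN k N (twoIndicator E + h)))
    (hsub : 1 + ε ∈ upperBounds (valueSetN k N (twoIndicator E - h)))
    (hEh : ∀ j ∈ E, |h j| ≤ 2 * ε) {A : Finset ℕ} (hA : A.card = k * N) :
    |∑ j ∈ A, h j| ≤ 5 * ε * N := by
  have hinter : |∑ j ∈ A ∩ E, h j| ≤ ε * N := by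
    have hε : 0 ≤ ε := by
      obtain ⟨j, hj⟩ := card_pos.mp (show 0 < E.card by omega)
      linarith [hEh j hj, abs_nonneg (h j)]
    have hcard : ((A ∩ E).card : ℝ) ≤ E.card := by exact_mod_cast card_le_card inter_subset_right
    have hE' : (2 : ℝ) * E.card = N := by exact_mod_cast hE
    calc |∑ j ∈ A ∩ E, h j| ≤ (A ∩ E).card * (2 * ε) :=
          abs_sum_le_card_mul fun j hj => hEh j (mem_inter.mp hj).2
      _ ≤ ε * N := by nlinarith
  have hdiff := abs_sum_le_of_disjoint_card_le hk hN hE hh hadd hsub sdiff_disjoint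
    ((card_le_card (sdiff_subset (t := E))).trans hA.le)
  rw [← sum_inter_add_sum_sdiff A E]
  linarith [abs_add_le (∑ j ∈ A ∩ E, h j) (∑ j ∈ A \ E, h j)]

lemma normN_le_three_mul (hk : 2 ≤ k) (hN : 0 < N) (hE : 2 * E.card = N)
    (hh : Tendsto h atTop (𝓝 0))
    (hadd : 1 + ε ∈ upperBounds (valueSetN k N (twoIndicator E + h)))
    (hsub : 1 + ε ∈ upperBounds (valueSetN k N (twoIndicator E - h)))
    (hpartner : ∀ j ∈ E, ∃ n m, 1 ≤ n ∧ j ∈ blockE n ∧ m ∈ blockE n ∧ m ∉ E) :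
    normN k N h ≤ 3 * ε * N := by
  have hEh : ∀ j ∈ E, |h j| ≤ 2 * ε := fun j hj => by
    obtain ⟨n, m, hn, hjn, hmn, hmE⟩ := hpartner j hj
    exact abs_le_two_mul_of_blockE_partner hadd hsub hn hjn hmn hj hmE
  have hpt := abs_apply_le_two_mul hk hN hE hh hadd hsub hEh
  have hN2 : (2 : ℝ) ≤ N := by exact_mod_cast (show 2 ≤ N by omega)
  have hε : 0 ≤ ε := by nlinarith [hpt 0, abs_nonneg (h 0)]
  refine normN_le (forall_mem_valueSetN_le (fun A hA => ?_) (fun j => ?_) fun _ l m _ _ _ => ?_)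
  · rw [div_le_iff₀ (by positivity)]
    nlinarith [abs_sum_le_five_mul hk hN hE hh hadd hsub hEh hA,
      mul_nonneg (mul_nonneg hε (by positivity : (0 : ℝ) ≤ N))
        (by linarith : (0 : ℝ) ≤ 3 * N - 5)]
  · have hk1 : (1 : ℝ) ≤ k := by exact_mod_cast (show 1 ≤ k by omega)
    exact (div_le_self (abs_nonneg (h j)) hk1).trans (by nlinarith [hpt j])
  · nlinarith [hpt l, hpt m]

end perturbation

/-- For even `N ≥ k`, `X_N = (c_0, ‖·‖_N)` is not locally almost square:
the norm-one vector `f = ∑_{j∈E} 2 e_j`, for a suitable set `E` of size `N/2`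
meeting each block `E_n`, `2 ≤ n ≤ N/2 + 1`, in exactly one point, admits no
`h ∈ c_0` with `‖h‖_N = 1` and `max (‖f + h‖_N) (‖f - h‖_N) ≤ 1 + ε`
whenever `0 < ε < 1/(3N)`. -/
theorem XN_not_LASQ (k N : ℕ) (hk : 2 ≤ k) (hkN : k ≤ N) (hNe : Even N) :
    ∃ E : Finset ℕ, E.card = N / 2 ∧
      (∀ n : ℕ, 2 ≤ n → n ≤ N / 2 + 1 → (E ∩ blockE n).card = 1) ∧
      (∀ j ∈ E, ∃ n : ℕ, 2 ≤ n ∧ n ≤ N / 2 + 1 ∧ j ∈ blockE n) ∧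
      ∀ f : ℕ → ℝ, (f = fun j => if j ∈ E then (2 : ℝ) else 0) →
        Tendsto f atTop (nhds 0) ∧ normN k N f = 1 ∧
        ∀ ε : ℝ, 0 < ε → ε < 1 / (3 * N) →
          ¬∃ h : ℕ → ℝ, Tendsto h atTop (nhds 0) ∧ normN k N h = 1 ∧
            max (normN k N (f + h)) (normN k N (f - h)) ≤ 1 + ε := by
  set E := powBlocks (N / 2)
  have hN : 0 < N := by omega
  have hE : 2 * E.card = N := by rw [card_powBlocks]; exact Nat.two_mul_div_two_of_even hNe
  refine ⟨E, card_powBlocks _, fun n h2n hnN => by rw [powBlocks_inter_blockE h2n hnN,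
    card_singleton], fun j hj => exists_blockE_of_mem_powBlocks hj, fun f hf => ?_⟩
  obtain rfl : f = twoIndicator E := hf
  refine ⟨tendsto_twoIndicator E, normN_twoIndicator hk hN hE
    (card_powBlocks_inter_blockE_le_one _), ?_⟩
  rintro ε - hεN ⟨h, hh, hnorm, hmax⟩
  have hadd : 1 + ε ∈ upperBounds (valueSetN k N (twoIndicator E + h)) := fun r hr =>
    (le_normN (by omega) (add_zero (0 : ℝ) ▸ (tendsto_twoIndicator E).add hh) hr).trans
      ((le_max_left _ _).trans hmax)
  have hsub : 1 + ε ∈ upperBounds (valueSetN k N (twoIndicator E - h)) := fun r hr =>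
    (le_normN (by omega) (sub_zero (0 : ℝ) ▸ (tendsto_twoIndicator E).sub hh) hr).trans
      ((le_max_right _ _).trans hmax)
  have hsmall := normN_le_three_mul hk hN hE hh hadd hsub fun j hj =>
    exists_partner_of_mem_powBlocks hj
  have : ε * (3 * N) < 1 := (lt_div_iff₀ (by positivity)).mp hεN
  linarith
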